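/- If u ∈ C(n)_k is a cactus with no (i,j,i)-subsequence with j=i+1 or j<i, in which the value n occurs exactly once, then every term ů_j of u^□ and of u^▪ is again a cactus (no (a,b,a,b) subsequence) with no (i,j,i)-subsequence with j=i+1 or j<i; conversely every element of C′_{n+1} arises as such a term ů_j for a unique u ∈ C′_n and position j. -/

import Mathlib

open Finsupp

/-- The free ℤ-module on sequences (the underlying module of the surjection operad). -/
abbrev FM : Type := List ℕ →₀ ℤ

/-- A sequence is non-degenerate if consecutive entries differ. -/
def Nondeg (u : List ℕ) : Prop := u.Chain' (· ≠ ·)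

/-- `u` has all its values in `{1,…,n}` and attains each of them. -/
def IsSurjSeq (n : ℕ) (u : List ℕ) : Prop :=
  (∀ x ∈ u, x ∈ Finset.Icc 1 n) ∧ ∀ v ∈ Finset.Icc 1 n, v ∈ u

/-- No subsequence of the form (i,j,i,j) with i ≠ j. -/
def NoIJIJ (u : List ℕ) : Prop := ∀ i j : ℕ, i ≠ j → ¬ List.Sublist [i, j, i, j] u

/-- No subsequence of the form (i,j,i) with j = i+1 or j < i. -/
def NoBadIJI (u : List ℕ) : Prop := ∀ i j : ℕ, (j = i + 1 ∨ j < i) → ¬ List.Sublist [i, j, i] u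

/-- A cactus with n lobes in degree k: a non-degenerate surjection
`{1,…,n+k} → {1,…,n}` with no (i,j,i,j) subsequence. -/
def IsCactus (n k : ℕ) (u : List ℕ) : Prop :=
  u.length = n + k ∧ Nondeg u ∧ IsSurjSeq n u ∧ NoIJIJ u

/-- The set C′ₙ: top-degree cacti with no (i,j,i) subsequence with j=i+1 or j<i. -/
def MemC' (n : ℕ) (u : List ℕ) : Prop := IsCactus n (n - 2) u ∧ NoBadIJI u

/-- Does the value at (0-based) index i reappear strictly later in u? -/
def Reoccurs (u : List ℕ) (i : ℕ) : Bool := (u.drop (i+1)).contains (u.getD i 0)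

/-- Relative degree of the prefix of u of length j (number of 0-based indices < j
whose value reappears later in u). -/
def prefDeg (u : List ℕ) (j : ℕ) : ℕ := ((List.range j).filter (fun i => Reoccurs u i)).length

/-- Relative degree of the segment of 0-based indices [a, b-1] of u. -/
def segDeg (u : List ℕ) (a b : ℕ) : ℕ :=
  ((List.range' a (b - a)).filter (fun i => Reoccurs u i)).length

/-- Replace the (0-based) j-th entry u(j) of u by the triple (u(j), w, u(j)). -/
def ringIns (u : List ℕ) (w j : ℕ) : List ℕ :=
  u.take j ++ [u.getD j 0, w, u.getD j 0] ++ u.drop (j+1)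

/-- The largest value occurring in u (the arity n for a surjection onto {1,…,n}). -/
def topVal (u : List ℕ) : ℕ := u.foldr max 0

/-- The degree of a surjection sequence: length minus number of distinct values. -/
def degOf (u : List ℕ) : ℕ := u.length - u.dedup.length

/-- The Berger–Fresse sign exponent for omitting the (0-based) i-th entry. -/
def deltaSignExp (u : List ℕ) (i : ℕ) : ℕ :=
  if Reoccurs u i then prefDeg u i
  else prefDeg u (((List.range i).filter (fun a => u.getD a 0 == u.getD i 0)).getLastD 0 + 1)

/-- The Berger–Fresse differential on a basis sequence. -/
noncomputable def deltaList (u : List ℕ) : FM :=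
  ∑ i ∈ Finset.range u.length,
    if u.count (u.getD i 0) = 1 then 0
    else ((-1 : ℤ) ^ deltaSignExp u i) • Finsupp.single (u.eraseIdx i) 1

/-- The Berger–Fresse differential, extended linearly. -/
noncomputable def deltaFM (x : FM) : FM := x.sum fun u c => c • deltaList u

/-- The white operation u^□ = Σ_{j<i₀} (−1)^{k+|u|_j} ů_j, where i₀ is the position of
the unique occurrence of the top value n and ů_j inserts a lobe n+1 over the j-th entry. -/
noncomputable def sqList (u : List ℕ) : FM :=
  ∑ j ∈ Finset.range (u.idxOf (topVal u)),
    ((-1 : ℤ) ^ (degOf u + prefDeg u j)) • Finsupp.single (ringIns u (topVal u + 1) j) 1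

/-- The black operation u^▪ = −Σ_{j>i₀} (−1)^{k+|u|_j} ů_j. -/
noncomputable def blList (u : List ℕ) : FM :=
  - ∑ j ∈ Finset.Ico (u.idxOf (topVal u) + 1) u.length,
    ((-1 : ℤ) ^ (degOf u + prefDeg u j)) • Finsupp.single (ringIns u (topVal u + 1) j) 1

/-- Linear extension of (−)^□. -/
noncomputable def sqFM (x : FM) : FM := x.sum fun u c => c • sqList u

/-- Linear extension of (−)^▪. -/
noncomputable def blFM (x : FM) : FM := x.sum fun u c => c • blList u

/-- The 0-based positions of the value t in v. -/
def tPositions (v : List ℕ) (t : ℕ) : List ℕ :=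
  (List.range v.length).filter (fun i => v.getD i 0 == t)

/-- Relabelling α(s) = s + t − 1 for the inner factor. -/
def alphaMap (t : ℕ) (l : List ℕ) : List ℕ := l.map (fun s => s + t - 1)

/-- Relabelling β(s) = s for s < t and s + n − 1 for s > t of the outer factor. -/
def betaMap (t nn : ℕ) (l : List ℕ) : List ℕ :=
  l.map (fun s => if s < t then s else s + nn - 1)

/-- The block of u from 1-based position a to b inclusive. -/
def blockSeg (u : List ℕ) (a b : ℕ) : List ℕ := (u.drop (a - 1)).take (b - a + 1)

/-- The q-th piece of v when it is cut at the occurrences of t (whose 0-based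
positions are listed in tp): v = (v₀, t, v₁, t, …, t, v_r). -/
def vPiece (v : List ℕ) (tp : List ℕ) (q : ℕ) : List ℕ :=
  if q = 0 then v.take (tp.getD 0 0)
  else if q = tp.length then v.drop (tp.getD (tp.length - 1) 0 + 1)
  else (v.drop (tp.getD (q-1) 0 + 1)).take (tp.getD q 0 - tp.getD (q-1) 0 - 1)

/-- The Koszul sign exponent Σ_{p ≤ q} deg(u_p)·deg(v_q) for the splitting with
1-based cut points jf = (j₀, …, j_r). -/
def bfSignExp (v : List ℕ) (u : List ℕ) (jf tp : List ℕ) : ℕ :=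
  ∑ p ∈ Finset.Icc 1 tp.length, ∑ q ∈ Finset.Icc p tp.length,
    (segDeg u (jf.getD (p-1) 0 - 1) (jf.getD p 0 - 1)) *
    (if q = tp.length then segDeg v (tp.getD (tp.length - 1) 0) (v.length - 1)
     else segDeg v (tp.getD (q-1) 0) (tp.getD q 0))

/-- The interleaved sequence (βv₀, αu₁, βv₁, …, αu_r, βv_r). -/
def bfResult (v : List ℕ) (t : ℕ) (u : List ℕ) (jf tp : List ℕ) : List ℕ :=
  betaMap t (topVal u) (vPiece v tp 0) ++
  (List.range tp.length).flatMap (fun p =>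
    alphaMap t (blockSeg u (jf.getD p 0) (jf.getD (p+1) 0)) ++
    betaMap t (topVal u) (vPiece v tp (p+1)))

/-- The Berger–Fresse operadic composition v ∘_t u, as a sum over all splittings
1 = j₀ ≤ j₁ ≤ … ≤ j_r = length u with Koszul signs. -/
noncomputable def bfComp (v : List ℕ) (t : ℕ) (u : List ℕ) : FM :=
  ∑ s ∈ Finset.sym (Finset.Icc 1 u.length) ((tPositions v t).length - 1),
    ((-1 : ℤ) ^ bfSignExp v u (1 :: (Multiset.sort s.1 (· ≤ ·) ++ [u.length])) (tPositions v t)) •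
      Finsupp.single
        (bfResult v t u (1 :: (Multiset.sort s.1 (· ≤ ·) ++ [u.length])) (tPositions v t)) 1

/-- Bilinear extension of the Berger–Fresse composition. -/
noncomputable def bfCompFM (x : FM) (t : ℕ) (y : FM) : FM :=
  x.sum fun v c => y.sum fun u d => (c * d) • bfComp v t u

/-- μ on reversed words: the head of the list is the last letter ξ_{n-1}, which is
the outermost operation; `true` stands for □ and `false` for ▪. -/
noncomputable def muW : List Bool → FM
  | [] => 0
  | [b] => Finsupp.single (if b then [2,1] else [1,2]) 1
  | b :: ξ => if b then sqFM (muW ξ) else blFM (muW ξ)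

/-- μ(m_ξ) for a word ξ = (ξ₁,…,ξ_{n-1}) ∈ {□,▪}^{n-1} written in the paper's order. -/
noncomputable def muP (ξ : List Bool) : FM := muW ξ.reverse

/-- Degree-0 (permutation) substitution composition. -/
def permSubst (σ : List ℕ) (t : ℕ) (τ : List ℕ) : List ℕ :=
  σ.flatMap fun s => if s = t then τ.map (· + (t - 1)) else [if s < t then s else s + τ.length - 1]


/-!
The largest value `M` of a nondegenerate word without bad `(i,j,i)` patterns occurs at most once,
since `M x M` with `x < M` is bad. Deleting it, and merging its two neighbours if they coincide,
shortens the word by at most two, so such a word with values in `{1,…,M}` has length at most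
`2M - 2`. An element of `C′_{n+1}` has length exactly `2n`, so deleting `n+1` must merge two equal
neighbours `a, n+1, a`; this recovers `u` and `j`, and `a ≠ n` because `n, n+1, n` is bad.

Conversely, a forbidden pattern in `ů_j` either uses the new letter `n+1` twice, which is
impossible, or avoids it and then already occurs in `u` once the copy of `u(j)` is merged back;
the one exception, `n, n+1, n`, would need a second `n`.
-/

namespace List

variable {α : Type*}

theorem exists_eq_append_cons_of_lt_length {l : List α} {j : ℕ} (h : j < l.length) :
    ∃ A c B, l = A ++ c :: B ∧ A.length = j :=
  ⟨l.take j, l[j], l.drop (j + 1), by rw [← drop_eq_getElem_cons h, take_append_drop],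
    by simp; omega⟩

theorem isChain_ne_append_or_of_append_cons {A B : List α} {x : α}
    (h : IsChain (· ≠ ·) (A ++ x :: B)) :
    IsChain (· ≠ ·) (A ++ B) ∨
      ∃ A₀ a B₀, A = A₀ ++ [a] ∧ B = a :: B₀ ∧
        IsChain (· ≠ ·) (A₀ ++ a :: B₀) := by
  have hA : IsChain (· ≠ ·) A := h.infix ⟨[], x :: B, by simp⟩
  have hB : IsChain (· ≠ ·) B := h.infix ⟨A ++ [x], [], by simp⟩
  rcases A.eq_nil_or_concat' with rfl | ⟨A₀, a, rfl⟩
  · exact Or.inl hB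
  rcases B with _ | ⟨b, B₀⟩
  · exact Or.inl (by simpa using hA)
  by_cases hab : a = b
  · subst hab
    refine Or.inr ⟨A₀, a, B₀, rfl, rfl, ?_⟩
    simpa using hA.append_overlap (l₃ := B₀) (by simpa using hB) (by simp)
  · left
    rw [isChain_append]
    simp_all

-- `A ++ c :: w :: c :: B` is `ringIns (A ++ c :: B) w A.length`: the letter `c` now sandwiches `w`.

theorem mem_sandwich_iff {A B : List α} {c w x : α} :
    x ∈ A ++ c :: w :: c :: B ↔ x = w ∨ x ∈ A ++ c :: B := by
  simp only [mem_append, mem_cons]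
  tauto

theorem IsChain.ne_sandwich {A B : List α} {c w : α} (h : IsChain (· ≠ ·) (A ++ c :: B))
    (hcw : c ≠ w) : IsChain (· ≠ ·) (A ++ c :: w :: c :: B) := by
  rw [isChain_append] at h ⊢
  simp_all [Ne.symm hcw]

theorem IsChain.sublist_cons_of_sublist_cons_cons {P B : List α} {c : α}
    (hP : IsChain (· ≠ ·) P) (h : P <+ c :: c :: B) : P <+ c :: B := by
  cases h with
  | cons _ h => exact h
  | cons_cons _ h =>
    cases h with
    | cons _ h => exact h.cons_cons c
    | cons_cons _ h => simp at hP

theorem IsChain.sublist_append_cons_of_sublist_append_cons_cons {P A B : List α} {c : α}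
    (hP : IsChain (· ≠ ·) P) (h : P <+ A ++ c :: c :: B) : P <+ A ++ c :: B := by
  obtain ⟨P₁, P₂, rfl, h₁, h₂⟩ := sublist_append_iff.mp h
  exact h₁.append ((hP.infix ⟨P₁, [], by simp⟩).sublist_cons_of_sublist_cons_cons h₂)

theorem IsChain.sublist_of_sublist_sandwich [DecidableEq α] {P A B : List α} {c w : α}
    (hP : IsChain (· ≠ ·) P) (hwP : w ∉ P) (h : P <+ A ++ c :: w :: c :: B) :
    P <+ A ++ c :: B := by
  have hfilter : P <+ (A ++ c :: c :: B).filter (· ≠ w) := by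
    have := h.filter (· ≠ w)
    rwa [filter_eq_self.mpr fun x hx => by simpa using fun h : x = w => hwP (h ▸ hx),
      show (A ++ c :: w :: c :: B).filter (· ≠ w) = (A ++ c :: c :: B).filter (· ≠ w) by
        simp [filter_append, filter_cons]] at this
  exact hP.sublist_append_cons_of_sublist_append_cons_cons (hfilter.trans filter_sublist)

theorem count_sandwich_self [DecidableEq α] {A B : List α} {c w : α} (hw : w ∉ A ++ c :: B) :
    (A ++ c :: w :: c :: B).count w = 1 := by
  simp only [mem_append, mem_cons, not_or] at hw
  simp [count_append, count_eq_zero_of_not_mem, hw.1, hw.2.2, Ne.symm hw.2.1]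

theorem idxOf_sandwich [DecidableEq α] {A B : List α} {c w : α} (hw : w ∉ A ++ c :: B) :
    (A ++ c :: w :: c :: B).idxOf w = A.length + 1 := by
  simp only [mem_append, mem_cons, not_or] at hw
  simp [idxOf_append_of_notMem hw.1, idxOf_cons_ne _ (Ne.symm hw.2.1)]

end List

theorem NoIJIJ.sublist {u v : List ℕ} (h : u.Sublist v) (hv : NoIJIJ v) : NoIJIJ u :=
  fun i j hij hsub => hv i j hij (hsub.trans h)

theorem NoBadIJI.sublist {u v : List ℕ} (h : u.Sublist v) (hv : NoBadIJI v) : NoBadIJI u :=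
  fun i j hij hsub => hv i j hij (hsub.trans h)

theorem NoIJIJ.sandwich {A B : List ℕ} {c w : ℕ} (hu : NoIJIJ (A ++ c :: B))
    (hw : w ∉ A ++ c :: B) : NoIJIJ (A ++ c :: w :: c :: B) := by
  intro i j hij hsub
  by_cases hwP : w ∈ [i, j, i, j]
  · have hcount := hsub.count_le w
    rw [List.count_sandwich_self hw] at hcount
    obtain rfl | rfl : w = i ∨ w = j := by simp at hwP; tauto
    all_goals simp [hij, Ne.symm hij] at hcount
  · have hP : [i, j, i, j].IsChain (· ≠ ·) := by simp [hij, Ne.symm hij]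
    exact hu i j hij (hP.sublist_of_sublist_sandwich hwP hsub)

theorem NoBadIJI.sandwich {A B : List ℕ} {c n : ℕ} (hu : NoBadIJI (A ++ c :: B))
    (hle : ∀ x ∈ A ++ c :: B, x ≤ n) (hcn : c ≠ n) (hn : (A ++ c :: B).count n ≤ 1) :
    NoBadIJI (A ++ c :: (n + 1) :: c :: B) := by
  have hw : n + 1 ∉ A ++ c :: B := fun h => by have := hle _ h; omega
  intro i j hij hsub
  have hne : i ≠ j := by omega
  by_cases hwP : n + 1 ∈ [i, j, i]
  · obtain rfl | rfl : n + 1 = i ∨ n + 1 = j := by simp at hwP; tauto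
    · have hcount := hsub.count_le (n + 1)
      rw [List.count_sandwich_self hw] at hcount
      simp [hne, Ne.symm hne] at hcount
    · have hi : i ∈ A ++ c :: B :=
        (List.mem_sandwich_iff.mp (hsub.subset (by simp))).resolve_left (by omega)
      obtain rfl : i = n := by have := hle i hi; omega
      have hcount := hsub.count_le i
      simp [List.count_append, hcn] at hn hcount
      omega
  · have hP : [i, j, i].IsChain (· ≠ ·) := by simp [hne, Ne.symm hne]
    exact hu i j hij (hP.sublist_of_sublist_sandwich hwP hsub)

theorem isSurjSeq_succ_iff {n : ℕ} {u v : List ℕ}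
    (hmem : ∀ x, x ∈ v ↔ x = n + 1 ∨ x ∈ u) (hu : n + 1 ∉ u) :
    IsSurjSeq (n + 1) v ↔ IsSurjSeq n u := by
  simp only [IsSurjSeq, Finset.mem_Icc, hmem]
  constructor
  · rintro ⟨hval, hsurj⟩
    refine ⟨fun x hx => ?_, fun x hx => (hsurj x (by omega)).resolve_left (by omega)⟩
    have := hval x (Or.inr hx)
    have : x ≠ n + 1 := fun h => hu (h ▸ hx)
    omega
  · rintro ⟨hval, hsurj⟩
    refine ⟨fun x hx => ?_, fun x hx => ?_⟩
    · rcases hx with rfl | hx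
      · omega
      · have := hval x hx; omega
    · by_cases hx' : x = n + 1
      · exact Or.inl hx'
      · exact Or.inr (hsurj x (by omega))

theorem ringIns_append_cons (A B : List ℕ) (c w : ℕ) :
    ringIns (A ++ c :: B) w A.length = A ++ c :: w :: c :: B := by
  simp [ringIns]

theorem ringIns_inj {u u' : List ℕ} {w j j' : ℕ} (hu : w ∉ u) (hu' : w ∉ u')
    (hj : j < u.length) (hj' : j' < u'.length) (h : ringIns u w j = ringIns u' w j') :
    u = u' ∧ j = j' := by
  obtain ⟨A, c, B, rfl, rfl⟩ := List.exists_eq_append_cons_of_lt_length hj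
  obtain ⟨A', c', B', rfl, rfl⟩ := List.exists_eq_append_cons_of_lt_length hj'
  rw [ringIns_append_cons, ringIns_append_cons] at h
  have hlen : A.length = A'.length := by
    simpa [List.idxOf_sandwich hu, List.idxOf_sandwich hu'] using congrArg (List.idxOf w) h
  obtain ⟨rfl, h⟩ := List.append_inj h hlen
  simp_all

theorem ringIns_isCactus_noBadIJI {n k : ℕ} {u : List ℕ} (hu : IsCactus n k u)
    (hbad : NoBadIJI u) (hn : u.count n = 1) {j : ℕ} (hj : j < u.length)
    (hjn : j ≠ u.idxOf n) :
    IsCactus (n + 1) (k + 1) (ringIns u (n + 1) j) ∧ NoBadIJI (ringIns u (n + 1) j) := by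
  obtain ⟨hlen, hnd, hsurj, hij⟩ := hu
  obtain ⟨A, c, B, rfl, rfl⟩ := List.exists_eq_append_cons_of_lt_length hj
  have hle : ∀ x ∈ A ++ c :: B, x ≤ n := fun x hx => (Finset.mem_Icc.mp (hsurj.1 x hx)).2
  have hw : n + 1 ∉ A ++ c :: B := fun h => by have := hle _ h; omega
  have hcn : c ≠ n := by
    rintro rfl
    have hA : c ∉ A := List.count_eq_zero.mp (by simp [List.count_append] at hn; omega)
    simp [List.idxOf_append_of_notMem hA] at hjn
  have hcw : c ≠ n + 1 := by have := hle c (by simp); omega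
  rw [ringIns_append_cons]
  exact ⟨⟨by simp at hlen ⊢; omega, List.IsChain.ne_sandwich hnd hcw,
    (isSurjSeq_succ_iff (fun _ => List.mem_sandwich_iff) hw).mpr hsurj, hij.sandwich hw⟩,
    hbad.sandwich hle hcn hn.le⟩

theorem not_duplicate_of_noBadIJI {w : List ℕ} {M : ℕ} (hnd : Nondeg w) (hbad : NoBadIJI w)
    (hle : ∀ x ∈ w, x ≤ M) : ¬ List.Duplicate M w := by
  induction w with
  | nil => simp
  | cons y t ih =>
    rw [List.duplicate_cons_iff]
    rintro (⟨rfl, hy⟩ | hdup)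
    · obtain ⟨x, t', rfl⟩ := List.exists_cons_of_ne_nil (List.ne_nil_of_mem hy)
      have hx : x ≠ y := (List.isChain_cons_cons.mp hnd).1.symm
      have hyt' : y ∈ t' := (List.mem_cons.mp hy).resolve_left (Ne.symm hx)
      exact hbad y x (Or.inr (lt_of_le_of_ne (hle x (by simp)) hx))
        (((List.singleton_sublist.mpr hyt').cons_cons x).cons_cons y)
    · exact ih hnd.tail (hbad.sublist (List.sublist_cons_self _ _))
        (fun x hx => hle x (List.mem_cons_of_mem _ hx)) hdup

theorem exists_eq_append_cons_of_noBadIJI {w : List ℕ} {M : ℕ} (hnd : Nondeg w)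
    (hbad : NoBadIJI w) (hle : ∀ x ∈ w, x ≤ M) (hM : M ∈ w) :
    ∃ A B, w = A ++ M :: B ∧ M ∉ A ∧ M ∉ B := by
  obtain ⟨A, B, rfl⟩ := List.append_of_mem hM
  have hcount := mt List.duplicate_iff_two_le_count.mpr (not_duplicate_of_noBadIJI hnd hbad hle)
  simp only [List.count_append, List.count_cons_self] at hcount
  exact ⟨A, B, rfl, fun h => hcount (by have := List.count_pos_iff.mpr h; omega),
    fun h => hcount (by have := List.count_pos_iff.mpr h; omega)⟩

theorem length_le_two_of_noBadIJI {w : List ℕ} (hnd : Nondeg w) (hbad : NoBadIJI w)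
    (hval : ∀ x ∈ w, x ∈ Finset.Icc 1 2) : w.length ≤ 2 := by
  match w with
  | [] | [_] | [_, _] => simp
  | a :: b :: c :: t =>
    have hab : a ≠ b := (List.isChain_cons_cons.mp hnd).1
    have hbc : b ≠ c := (List.isChain_cons_cons.mp hnd.tail).1
    have ha := Finset.mem_Icc.mp (hval a (by simp))
    have hb := Finset.mem_Icc.mp (hval b (by simp))
    have hc := Finset.mem_Icc.mp (hval c (by simp))
    have hca : c = a := by omega
    subst hca
    exact (hbad c b (by omega)
      ((((List.nil_sublist t).cons_cons c).cons_cons b).cons_cons c)).elim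

theorem length_add_two_le_of_noBadIJI {M : ℕ} (hM : 2 ≤ M) {w : List ℕ} (hnd : Nondeg w)
    (hbad : NoBadIJI w) (hval : ∀ x ∈ w, x ∈ Finset.Icc 1 M) : w.length + 2 ≤ 2 * M := by
  induction M, hM using Nat.le_induction generalizing w with
  | base =>
    have := length_le_two_of_noBadIJI hnd hbad hval
    omega
  | succ M hM ih =>
    by_cases hw : M + 1 ∈ w
    · obtain ⟨A, B, rfl, hA, hB⟩ := exists_eq_append_cons_of_noBadIJI hnd hbad
        (fun x hx => (Finset.mem_Icc.mp (hval x hx)).2) hw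
      have key : ∀ w', Nondeg w' → w'.Sublist (A ++ B) → w'.length + 2 ≤ 2 * M := by
        intro w' hnd' hsub
        have hsub' : w'.Sublist (A ++ (M + 1) :: B) :=
          hsub.trans ((List.sublist_cons_self _ B).append_left A)
        refine ih hnd' (hbad.sublist hsub') fun x hx => ?_
        have := Finset.mem_Icc.mp (hval x (hsub'.subset hx))
        have : x ≠ M + 1 := by
          rintro rfl
          exact (List.mem_append.mp (hsub.subset hx)).elim hA hB
        simp only [Finset.mem_Icc]
        omega
      rcases List.isChain_ne_append_or_of_append_cons hnd with
        hnd' | ⟨A₀, a, B₀, rfl, rfl, hnd'⟩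
      · have := key _ hnd' (List.Sublist.refl _)
        simp only [List.length_append, List.length_cons] at this ⊢
        omega
      · have := key _ hnd' (by simp)
        simp only [List.length_append, List.length_cons, List.length_nil] at this ⊢
        omega
    · have := ih hnd hbad fun x hx => by
        have := Finset.mem_Icc.mp (hval x hx)
        have : x ≠ M + 1 := fun h => hw (h ▸ hx)
        simp only [Finset.mem_Icc]
        omega
      omega

theorem existsUnique_ringIns_eq {n : ℕ} (hn : 2 ≤ n) {v : List ℕ} (hv : MemC' (n + 1) v) :
    ∃! uj : List ℕ × ℕ, MemC' n uj.1 ∧ uj.2 < uj.1.length ∧ uj.2 ≠ uj.1.idxOf n ∧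
      ringIns uj.1 (n + 1) uj.2 = v := by
  obtain ⟨⟨hlen, hnd, hsurj, hij⟩, hbad⟩ := hv
  obtain ⟨A, B, rfl, hA, hB⟩ := exists_eq_append_cons_of_noBadIJI hnd hbad
    (fun x hx => (Finset.mem_Icc.mp (hsurj.1 x hx)).2) (hsurj.2 _ (by simp))
  rcases List.isChain_ne_append_or_of_append_cons hnd with
    hnd' | ⟨A₀, a, B₀, rfl, rfl, hnd'⟩
  · have hsurj' : IsSurjSeq n (A ++ B) :=
      (isSurjSeq_succ_iff (by simp; tauto) (by simp [hA, hB])).mp hsurj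
    have := length_add_two_le_of_noBadIJI hn hnd'
      (hbad.sublist ((List.sublist_cons_self _ B).append_left A)) hsurj'.1
    simp at hlen this
    omega
  have hv : A₀ ++ [a] ++ (n + 1) :: a :: B₀ = A₀ ++ a :: (n + 1) :: a :: B₀ := by simp
  rw [hv] at hlen hsurj hij hbad ⊢
  have hw : n + 1 ∉ A₀ ++ a :: B₀ := by simp_all
  have hsub : (A₀ ++ a :: B₀).Sublist (A₀ ++ a :: (n + 1) :: a :: B₀) := by simp
  have hsurj' := (isSurjSeq_succ_iff (fun _ => List.mem_sandwich_iff) hw).mp hsurj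
  have han : a ≠ n := by
    rintro rfl
    exact hbad a (a + 1) (Or.inl rfl) <|
      ((((List.nil_sublist B₀).cons_cons a).cons_cons (a + 1)).cons_cons a).trans
        (List.sublist_append_right A₀ _)
  have hu : MemC' n (A₀ ++ a :: B₀) :=
    ⟨⟨by simp at hlen ⊢; omega, hnd', hsurj', hij.sublist hsub⟩, hbad.sublist hsub⟩
  refine ⟨(A₀ ++ a :: B₀, A₀.length),
    ⟨hu, by simp, fun h => han ?_, ringIns_append_cons ..⟩, ?_⟩
  · have hidx := List.getElem_idxOf (List.idxOf_lt_length_iff.mpr (hsurj'.2 n (by simp; omega)))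
    simpa [← h] using hidx
  · rintro ⟨u', j'⟩ ⟨⟨⟨-, -, ⟨hval', -⟩, -⟩, -⟩, hj', -, heq⟩
    have hwu' : n + 1 ∉ u' := fun h => by have := Finset.mem_Icc.mp (hval' _ h); omega
    obtain ⟨rfl, rfl⟩ :=
      ringIns_inj hwu' hw hj' (by simp) (heq.trans (ringIns_append_cons ..).symm)
    rfl

/-- inserting a lobe n+1 over the j-th entry (j not the position of the
unique occurrence of n) of a cactus with no bad (i,j,i) subsequence again yields such
a cactus; conversely every element of C′_{n+1} arises as ů_j for a unique u ∈ C′ₙ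
and position j. -/
theorem ringIns_closure_and_bijection :
    (∀ n k : ℕ, ∀ u : List ℕ, IsCactus n k u → NoBadIJI u → u.count n = 1 →
      ∀ j : ℕ, j < u.length → j ≠ u.idxOf n →
        IsCactus (n + 1) (k + 1) (ringIns u (n + 1) j) ∧
        NoBadIJI (ringIns u (n + 1) j)) ∧
    (∀ n : ℕ, 2 ≤ n → ∀ v : List ℕ, MemC' (n + 1) v →
      ∃! uj : List ℕ × ℕ, MemC' n uj.1 ∧ uj.2 < uj.1.length ∧
        uj.2 ≠ uj.1.idxOf n ∧ ringIns uj.1 (n + 1) uj.2 = v) :=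
  ⟨fun _ _ _ hu hbad hn _ hj hjn => ringIns_isCactus_noBadIJI hu hbad hn hj hjn,
    fun _ hn _ hv => existsUnique_ringIns_eq hn hv⟩
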